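/- arXiv:1702.02375 — 3 statements merged into one kernel-verified Lean document; each statement's English description precedes it below -/
import Mathlib

section
/- Let B be an infinite primitive set of positive integers. The following are equivalent: (i) the window W is topologically regular, i.e., W equals the closure of its interior in H; (ii) there are no d ∈ ℕ and no infinite pairwise coprime set A ⊆ ℕ \ {1} such that d·A ⊆ B; (iii) A_∞ = ∅; (iv) E = F_B. -/
/-!
Everything is read off the residues `Δ n`. The cylinder of level `S` around `Δ n` lies in the
window iff the whole class `n + lcm(S) ℤ` is `B`-free, i.e. iff `n ∈ F_{A_S}`; hence
`Δ n ∈ int W ↔ n ∈ E`, and since `Δ(ℤ)` is dense, `h ∈ cl (int W)` iff every cylinder around `h`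
contains some `Δ n` with `n ∈ E`.

An element `n ∈ A_∞` lies in `F_B ∖ E` (by primitivity), and a greedy choice yields infinitely
many `b ∈ B` with pairwise gcd `n`, i.e. `n • A ⊆ B` with `A` pairwise coprime. Conversely, if
`d • A ⊆ B`, then `Δ d ∈ W` while no multiple of `d` lies in `E` (for each `S` some `a ∈ A` is
coprime to `lcm S`), so `W` is not regular. Finally, a point of `F_B ∖ E`, or a point of
`W ∖ cl (int W)`, produces for every finite `T ⊆ B` an element of some `A_{T'}`, `T' ⊇ T`, below a
fixed bound and outside `T'`; a value taken cofinally belongs to `A_∞`. In the second case the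
bound comes from choosing in the relevant residue class a representative whose common divisors
with `lcm T'` all divide the level of the cylinder (lifting units mod `lcm T'`).
-/

open Set MeasureTheory Filter Topology

namespace BFree

/-- The ambient compact group `∏_{b ∈ B} ℤ/bℤ`. -/
abbrev Gspace (B : Set ℕ+) : Type := ∀ b : B, ZMod ((b : ℕ+) : ℕ)

/-- The diagonal embedding `Δ : ℤ → ∏_{b ∈ B} ℤ/bℤ`. -/
def delta (B : Set ℕ+) : ℤ →+ Gspace B where
  toFun n := fun b => (n : ZMod ((b : ℕ+) : ℕ))
  map_zero' := by funext b; simp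
  map_add' m n := by funext b; simp

/-- `H`, the closure of `Δ(ℤ)`, as a (closed) subgroup of `Gspace B`. -/
def Hgrp (B : Set ℕ+) : AddSubgroup (Gspace B) :=
  (delta B).range.topologicalClosure

/-- `H` as a compact topological group. -/
abbrev Hspace (B : Set ℕ+) : Type := ↥(Hgrp B)

instance (B : Set ℕ+) : CompactSpace (Hspace B) :=
  isCompact_iff_compactSpace.mp
    (IsClosed.isCompact (AddSubgroup.isClosed_topologicalClosure _))

instance (B : Set ℕ+) : BorelSpace (Hspace B) := Subtype.borelSpace _

/-- The window `W = {h ∈ H : h_b ≠ 0 for all b ∈ B}`. -/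
def window (B : Set ℕ+) : Set (Hspace B) :=
  {h | ∀ b : B, (h : Gspace B) b ≠ 0}

/-- `Δ(n)` as an element of `H`. -/
def deltaH (B : Set ℕ+) (n : ℤ) : Hspace B :=
  ⟨delta B n, (delta B).range.le_topologicalClosure ⟨n, rfl⟩⟩

/-- The set of multiples `M_B ⊆ ℤ` of a set `B` of positive integers. -/
def MultSet (B : Set ℕ+) : Set ℤ := {n | ∃ b ∈ B, ((b : ℕ) : ℤ) ∣ n}

/-- The `B`-free set `F_B = ℤ ∖ M_B`. -/
def FreeSet (B : Set ℕ+) : Set ℤ := {n | ∀ b ∈ B, ¬ ((b : ℕ) : ℤ) ∣ n}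

/-- Set of multiples of a set of natural numbers. -/
def MultSetN (C : Set ℕ) : Set ℤ := {n | ∃ c ∈ C, (c : ℤ) ∣ n}

/-- Free set of a set of natural numbers. -/
def FreeSetN (C : Set ℕ) : Set ℤ := {n | ∀ c ∈ C, ¬ (c : ℤ) ∣ n}

/-- `#(M ∩ [1, N]) / N`. -/
noncomputable def densSeq (M : Set ℤ) (N : ℕ) : ℝ :=
  (Nat.card ↥(M ∩ Set.Icc (1 : ℤ) (N : ℤ)) : ℝ) / N

/-- Lower (asymptotic) density of a set of integers. -/
noncomputable def lowerDensity (M : Set ℤ) : ℝ := Filter.liminf (densSeq M) Filter.atTop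

/-- Upper (asymptotic) density of a set of integers. -/
noncomputable def upperDensity (M : Set ℤ) : ℝ := Filter.limsup (densSeq M) Filter.atTop

/-- `B` is taut if removing any element strictly decreases the lower density
of the set of multiples. -/
def Taut (B : Set ℕ+) : Prop :=
  ∀ b ∈ B, lowerDensity (MultSet (B \ {b})) < lowerDensity (MultSet B)

/-- `B` is primitive if no element divides another. -/
def Primitive (B : Set ℕ+) : Prop :=
  ∀ b ∈ B, ∀ b' ∈ B, (b : ℕ) ∣ (b' : ℕ) → b = b'

/-- `lcm(S)` for a finite set of positive integers. -/
def lcmS (S : Finset ℕ+) : ℕ := S.lcm fun b => (b : ℕ)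

/-- `A_S = {gcd(b, lcm S) : b ∈ B}`. -/
def ASet (B : Set ℕ+) (S : Finset ℕ+) : Set ℕ :=
  {m | ∃ b ∈ B, m = Nat.gcd (b : ℕ) (lcmS S)}

/-- The cylinder set `U_S(h) ⊆ H`. -/
def cyl (B : Set ℕ+) (S : Finset ℕ+) (hS : ↑S ⊆ B) (h : Hspace B) : Set (Hspace B) :=
  {h' | ∀ b, ∀ hb : b ∈ S, (h' : Gspace B) ⟨b, hS hb⟩ = (h : Gspace B) ⟨b, hS hb⟩}

/-- `E = ⋃_{S ⊆ B finite} F_{A_S}`. -/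
def Eset (B : Set ℕ+) : Set ℤ :=
  ⋃ (S : Finset ℕ+) (_ : ↑S ⊆ B), FreeSetN (ASet B S)

/-- `A_∞`. -/
def Ainfty (B : Set ℕ+) : Set ℕ :=
  {n | ∀ S : Finset ℕ+, ↑S ⊆ B →
    ∃ S' : Finset ℕ+, S ⊆ S' ∧ ↑S' ⊆ B ∧ n ∈ ASet B S' ∧ ∀ b ∈ S', (b : ℕ) ≠ n}

/-- The indicator `η` of the `B`-free set, as a point of `{0,1}^ℤ`. -/
noncomputable def eta (B : Set ℕ+) : ℤ → Bool :=
  fun n => @decide (n ∈ FreeSet B) (Classical.propDecidable _)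

/-- The left shift on `{0,1}^ℤ`, iterated `k` times (`k ∈ ℤ`). -/
def shift (k : ℤ) (x : ℤ → Bool) : ℤ → Bool := fun n => x (n + k)

/-- The orbit closure `X_η` of `η` in `{0,1}^ℤ`. -/
noncomputable def Xeta (B : Set ℕ+) : Set (ℤ → Bool) :=
  closure {x | ∃ k : ℤ, x = shift k (eta B)}


end BFree

lemma Finset.exists_forall_exists_superset_of_bounded {α : Type*} (s : Set α)
    (R : Finset α → ℕ → Prop) (N : ℕ)
    (h : ∀ T : Finset α, ↑T ⊆ s → ∃ T', T ⊆ T' ∧ ↑T' ⊆ s ∧ ∃ m ≤ N, R T' m) :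
    ∃ m, ∀ S : Finset α, ↑S ⊆ s → ∃ S', S ⊆ S' ∧ ↑S' ⊆ s ∧ R S' m := by
  classical
  by_contra! hR
  -- every `m ≤ N` is avoided above some `S m`; the union of these is a contradiction
  choose S hSs hS using hR
  obtain ⟨T', hST', hT's, m, hmN, hm⟩ :=
    h ((Finset.range (N + 1)).biUnion S) (by simpa using fun m _ => hSs m)
  refine hS m T' ((Finset.subset_biUnion_of_mem S ?_).trans hST') hT's hm
  exact Finset.mem_range.2 (Nat.lt_succ_of_le hmN)

lemma Set.Infinite.exists_coprime {A : Set ℕ} (hA : A.Infinite) (hAcop : A.Pairwise Nat.Coprime)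
    {L : ℕ} (hL : L ≠ 0) : ∃ a ∈ A, Nat.Coprime a L := by
  by_contra! h
  -- `a ↦ minFac (gcd a L)` sends `A` injectively into the primes dividing `L`
  refine hA (Set.Finite.of_finite_image (f := fun a => (Nat.gcd a L).minFac)
    ((Set.finite_Iic L).subset ?_) fun a ha a' ha' heq => ?_)
  · rintro _ ⟨a, -, rfl⟩
    exact Nat.le_of_dvd (Nat.pos_of_ne_zero hL) ((Nat.minFac_dvd _).trans (Nat.gcd_dvd_right _ _))
  · by_contra hne
    have hp := Nat.minFac_prime (h a ha)
    have hpa : (Nat.gcd a L).minFac ∣ a := (Nat.minFac_dvd _).trans (Nat.gcd_dvd_left _ _)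
    have hpa' : (Nat.gcd a' L).minFac ∣ a' := (Nat.minFac_dvd _).trans (Nat.gcd_dvd_left _ _)
    rw [← show (Nat.gcd a L).minFac = (Nat.gcd a' L).minFac from heq] at hpa'
    exact hp.one_lt.ne' (Nat.eq_one_of_dvd_coprimes (hAcop ha ha' hne) hpa hpa')

lemma Set.Infinite.exists_pairwise_coprime_of_pairwise_gcd_dvd {C : Set ℕ} {n : ℕ}
    (hC : C.Infinite) (hdvd : ∀ c ∈ C, n ∣ c) (h0 : 0 ∉ C) (hn : n ∉ C)
    (hgcd : C.Pairwise fun x y => Nat.gcd x y ∣ n) :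
    ∃ A : Set ℕ, A.Infinite ∧ (∀ a ∈ A, 1 < a) ∧ A.Pairwise Nat.Coprime ∧
      ∀ a ∈ A, n * a ∈ C := by
  have hmul : ∀ c ∈ C, n * (c / n) = c := fun c hc => Nat.mul_div_cancel' (hdvd c hc)
  have hn0 : n ≠ 0 := by
    obtain ⟨c, hc⟩ := hC.nonempty
    rintro rfl
    exact h0 (Nat.eq_zero_of_zero_dvd (hdvd c hc) ▸ hc)
  refine ⟨(· / n) '' C, hC.image fun c hc c' hc' h => ?_, ?_, ?_, ?_⟩
  · rw [← hmul c hc, ← hmul c' hc', h]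
  · rintro _ ⟨c, hc, rfl⟩
    have hc0 : c / n ≠ 0 := fun h => h0 (by rwa [← hmul c hc, h, mul_zero] at hc)
    have hc1 : c / n ≠ 1 := fun h => hn (by rwa [← hmul c hc, h, mul_one] at hc)
    exact Nat.one_lt_iff_ne_zero_and_ne_one.2 ⟨hc0, hc1⟩
  · rintro _ ⟨c, hc, rfl⟩ _ ⟨c', hc', rfl⟩ hne
    have hcc' : c ≠ c' := fun h => hne (h ▸ rfl)
    have h := hgcd hc hc' hcc'
    rw [← hmul c hc, ← hmul c' hc', Nat.gcd_mul_left] at h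
    exact Nat.dvd_one.1 (Nat.dvd_of_mul_dvd_mul_left (Nat.pos_of_ne_zero hn0) (by rwa [mul_one]))
  · rintro _ ⟨c, hc, rfl⟩
    rwa [hmul c hc]

lemma Int.exists_modEq_forall_dvd_imp_dvd {L M : ℕ} [NeZero M] (hLM : L ∣ M) (n₀ : ℤ) :
    ∃ n : ℤ, n ≡ n₀ [ZMOD L] ∧ ∀ c : ℕ, c ∣ M → (c : ℤ) ∣ n → c ∣ L := by
  obtain ⟨d, hdL, u, hu, hn₀⟩ := ZMod.eq_unit_mul_divisor (n₀ : ZMod L)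
  obtain ⟨v, hv⟩ := ZMod.unitsMap_surjective hLM hu.unit
  refine ⟨((v : ZMod M).val * d : ℕ), ?_, fun c hcM hcn => ?_⟩
  · have hvu : (((v : ZMod M).val : ℕ) : ZMod L) = u := by
      rw [ZMod.natCast_val, ← ZMod.unitsMap_val hLM, hv, IsUnit.unit_spec]
    rw [← ZMod.intCast_eq_intCast_iff, hn₀]
    push_cast
    rw [hvu]
  · have hcop : Nat.Coprime c (v : ZMod M).val :=
      ((ZMod.val_coe_unit_coprime v).coprime_dvd_right hcM).symm
    exact (hcop.dvd_of_dvd_mul_left (Int.natCast_dvd_natCast.1 hcn)).trans hdL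

lemma Int.natCast_gcd_dvd_iff_exists_modEq {b L : ℕ} {n : ℤ} :
    ((Nat.gcd b L : ℕ) : ℤ) ∣ n ↔ ∃ m, m ≡ n [ZMOD L] ∧ (b : ℤ) ∣ m := by
  constructor
  · rintro ⟨c, rfl⟩
    refine ⟨b * (Nat.gcdA b L * c), ?_, dvd_mul_right _ _⟩
    rw [Int.modEq_iff_dvd, Nat.gcd_eq_gcd_ab]
    exact ⟨Nat.gcdB b L * c, by ring⟩
  · rintro ⟨m, hmn, hbm⟩
    have hL : ((Nat.gcd b L : ℕ) : ℤ) ∣ n - m :=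
      (Int.natCast_dvd_natCast.2 (Nat.gcd_dvd_right b L)).trans (Int.modEq_iff_dvd.1 hmn)
    have hm : ((Nat.gcd b L : ℕ) : ℤ) ∣ m :=
      (Int.natCast_dvd_natCast.2 (Nat.gcd_dvd_left b L)).trans hbm
    simpa using dvd_add hL hm

namespace BFree

variable {B : Set ℕ+}

lemma lcmS_ne_zero (S : Finset ℕ+) : lcmS S ≠ 0 := by
  rw [lcmS, Ne, Finset.lcm_eq_zero_iff]
  rintro ⟨b, -, hb⟩
  exact PNat.ne_zero b hb

instance (S : Finset ℕ+) : NeZero (lcmS S) := ⟨lcmS_ne_zero S⟩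

lemma dvd_lcmS {S : Finset ℕ+} {b : ℕ+} (hb : b ∈ S) : (b : ℕ) ∣ lcmS S :=
  Finset.dvd_lcm hb

lemma lcmS_dvd_lcmS {S T : Finset ℕ+} (h : S ⊆ T) : lcmS S ∣ lcmS T :=
  Finset.lcm_dvd fun _ hb => Finset.dvd_lcm (h hb)

lemma modEq_lcmS_iff {S : Finset ℕ+} {m n : ℤ} :
    m ≡ n [ZMOD lcmS S] ↔ ∀ b ∈ S, m ≡ n [ZMOD (b : ℕ)] := by
  simp only [Int.modEq_iff_dvd, Int.natCast_dvd, lcmS, Finset.lcm_dvd_iff]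

lemma dvd_lcmS_of_mem_ASet {S : Finset ℕ+} {c : ℕ} (hc : c ∈ ASet B S) : c ∣ lcmS S := by
  obtain ⟨b, -, rfl⟩ := hc
  exact Nat.gcd_dvd_right _ _

lemma mem_FreeSetN_ASet_iff {S : Finset ℕ+} {n : ℤ} :
    n ∈ FreeSetN (ASet B S) ↔ ∀ m, m ≡ n [ZMOD lcmS S] → m ∈ FreeSet B := by
  constructor
  · intro h m hm b hb hbm
    exact h _ ⟨b, hb, rfl⟩ (Int.natCast_gcd_dvd_iff_exists_modEq.2 ⟨m, hm, hbm⟩)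
  · rintro h _ ⟨b, hb, rfl⟩ hdvd
    obtain ⟨m, hm, hbm⟩ := Int.natCast_gcd_dvd_iff_exists_modEq.1 hdvd
    exact h m hm b hb hbm

lemma mem_Eset_iff {n : ℤ} :
    n ∈ Eset B ↔ ∃ S : Finset ℕ+, ↑S ⊆ B ∧ n ∈ FreeSetN (ASet B S) := by
  simp [Eset]

lemma notMem_Eset_iff {n : ℤ} :
    n ∉ Eset B ↔ ∀ T : Finset ℕ+, ↑T ⊆ B → ∃ c ∈ ASet B T, (c : ℤ) ∣ n := by
  simp [mem_Eset_iff, FreeSetN]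

lemma Eset_subset_FreeSet : Eset B ⊆ FreeSet B := fun n hn => by
  obtain ⟨S, -, hS⟩ := mem_Eset_iff.1 hn
  exact mem_FreeSetN_ASet_iff.1 hS n (Int.ModEq.refl n)

lemma deltaH_apply (n : ℤ) (b : B) : (deltaH B n : Gspace B) b = (n : ZMod (b : ℕ+)) := rfl

lemma deltaH_mem_window_iff {n : ℤ} : deltaH B n ∈ window B ↔ n ∈ FreeSet B := by
  simp [window, FreeSet, deltaH_apply, ZMod.intCast_zmod_eq_zero_iff_dvd]

lemma isClosed_window : IsClosed (window B) := by
  have hw : window B = ⋂ b : B, (fun h : Hspace B => (h : Gspace B) b) ⁻¹' {0}ᶜ := by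
    ext h; simp [window]
  rw [hw]
  exact isClosed_iInter fun b =>
    (isClosed_discrete _).preimage ((continuous_apply b).comp continuous_subtype_val)

lemma denseRange_deltaH : DenseRange (deltaH B) := by
  rw [DenseRange, Subtype.dense_iff, ← Set.range_comp]
  exact subset_of_eq (by simp [Hgrp, AddSubgroup.topologicalClosure_coe]; rfl)

section

variable {S : Finset ℕ+} {hS : ↑S ⊆ B}

lemma mem_cyl_self (h : Hspace B) : h ∈ cyl B S hS h := fun _ _ => rfl

lemma isOpen_cyl (h : Hspace B) : IsOpen (cyl B S hS h) := by
  have hc : cyl B S hS h = (fun (y : Hspace B) (b : S) => (y : Gspace B) ⟨b, hS b.2⟩) ⁻¹'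
      {fun b : S => (h : Gspace B) ⟨b, hS b.2⟩} := by
    ext y; simp [cyl, funext_iff]
  rw [hc]
  exact (isOpen_discrete _).preimage
    (continuous_pi fun b => (continuous_apply _).comp continuous_subtype_val)

lemma cyl_eq_of_mem {h y : Hspace B} (hy : y ∈ cyl B S hS h) : cyl B S hS y = cyl B S hS h := by
  ext z
  exact forall₂_congr fun b hb => by rw [hy b hb]

lemma exists_cyl_subset_of_mem_nhds {h : Hspace B} {V : Set (Hspace B)} (hV : V ∈ 𝓝 h) :
    ∃ (S : Finset ℕ+) (hS : ↑S ⊆ B), cyl B S hS h ⊆ V := by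
  classical
  rw [nhds_subtype_eq_comap, Filter.mem_comap] at hV
  obtain ⟨U, hU, hUV⟩ := hV
  rw [nhds_pi, Filter.mem_pi] at hU
  obtain ⟨I, hI, t, ht, hIt⟩ := hU
  refine ⟨hI.toFinset.image Subtype.val, by simp [Set.image_subset_iff], fun y hy => hUV ?_⟩
  refine hIt fun i hi => ?_
  have hyi := hy i.1 (Finset.mem_image_of_mem _ (hI.mem_toFinset.2 hi))
  simp only [hyi]
  exact mem_of_mem_nhds (ht i)

lemma exists_deltaH_mem_cyl (h : Hspace B) : ∃ n, deltaH B n ∈ cyl B S hS h :=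
  denseRange_deltaH.exists_mem_open (isOpen_cyl h) ⟨h, mem_cyl_self h⟩

lemma deltaH_mem_cyl_deltaH_iff {m n : ℤ} :
    deltaH B m ∈ cyl B S hS (deltaH B n) ↔ m ≡ n [ZMOD lcmS S] := by
  simp [cyl, deltaH_apply, ZMod.intCast_eq_intCast_iff, modEq_lcmS_iff]

lemma apply_eq_of_deltaH_mem_cyl {h : Hspace B} {n : ℤ} (hn : deltaH B n ∈ cyl B S hS h)
    {q : ℕ+} (hq : q ∈ B) (hqS : (q : ℕ) ∣ lcmS S) :
    (h : Gspace B) ⟨q, hq⟩ = (n : ZMod q) := by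
  classical
  have hqS' : ↑(insert q S) ⊆ B := by simpa [Set.insert_subset_iff] using ⟨hq, hS⟩
  obtain ⟨m, hm⟩ := exists_deltaH_mem_cyl (hS := hqS') h
  have hmS : deltaH B m ∈ cyl B S hS (deltaH B n) :=
    cyl_eq_of_mem hn ▸ fun b hb => hm b (Finset.mem_insert_of_mem hb)
  rw [← hm q (Finset.mem_insert_self q S), deltaH_apply, ZMod.intCast_eq_intCast_iff]
  exact (deltaH_mem_cyl_deltaH_iff.1 hmS).of_dvd (Int.natCast_dvd_natCast.2 hqS)

lemma cyl_deltaH_subset_window_iff {n : ℤ} :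
    cyl B S hS (deltaH B n) ⊆ window B ↔ ∀ m, m ≡ n [ZMOD lcmS S] → m ∈ FreeSet B := by
  refine ⟨fun h m hm => deltaH_mem_window_iff.1 (h (deltaH_mem_cyl_deltaH_iff.2 hm)),
    fun h => ?_⟩
  refine (denseRange_deltaH.open_subset_closure_inter (isOpen_cyl (hS := hS) _)).trans
    (closure_minimal ?_ isClosed_window)
  rintro _ ⟨hm, m, rfl⟩
  exact deltaH_mem_window_iff.2 (h m (deltaH_mem_cyl_deltaH_iff.1 hm))

end

lemma deltaH_mem_interior_window_iff {n : ℤ} :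
    deltaH B n ∈ interior (window B) ↔ n ∈ Eset B := by
  rw [mem_Eset_iff]
  constructor
  · intro hn
    obtain ⟨S, hS, hSW⟩ := exists_cyl_subset_of_mem_nhds (mem_interior_iff_mem_nhds.1 hn)
    exact ⟨S, hS, mem_FreeSetN_ASet_iff.2 (cyl_deltaH_subset_window_iff.1 hSW)⟩
  · rintro ⟨S, hS, hn⟩
    exact mem_interior.2 ⟨_, cyl_deltaH_subset_window_iff.2 (mem_FreeSetN_ASet_iff.1 hn),
      isOpen_cyl (hS := hS) _, mem_cyl_self _⟩

lemma mem_closure_interior_window_iff {h : Hspace B} :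
    h ∈ closure (interior (window B)) ↔
      ∀ (S : Finset ℕ+) (hS : ↑S ⊆ B), ∃ n ∈ Eset B, deltaH B n ∈ cyl B S hS h := by
  constructor
  · intro hcl S hS
    obtain ⟨y, hyS, hyW⟩ := mem_closure_iff.1 hcl _ (isOpen_cyl (hS := hS) h) (mem_cyl_self h)
    obtain ⟨n, hnS, hnW⟩ :=
      denseRange_deltaH.exists_mem_open ((isOpen_cyl h).inter isOpen_interior) ⟨y, hyS, hyW⟩
    exact ⟨n, deltaH_mem_interior_window_iff.1 hnW, hnS⟩
  · intro hE
    refine mem_closure_iff_nhds.2 fun V hV => ?_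
    obtain ⟨S, hS, hSV⟩ := exists_cyl_subset_of_mem_nhds hV
    obtain ⟨n, hnE, hnS⟩ := hE S hS
    exact ⟨_, hSV hnS, deltaH_mem_interior_window_iff.2 hnE⟩

lemma coe_ne_of_mem_Ainfty {n : ℕ} (hn : n ∈ Ainfty B) {b : ℕ+} (hb : b ∈ B) :
    (b : ℕ) ≠ n := by
  obtain ⟨S', hbS', -, -, hS'n⟩ := hn {b} (by simpa using hb)
  exact hS'n b (hbS' (Finset.mem_singleton_self b))

lemma mem_FreeSet_of_mem_Ainfty (hprim : Primitive B) {n : ℕ} (hn : n ∈ Ainfty B) :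
    (n : ℤ) ∈ FreeSet B := by
  intro b hb hbn
  obtain ⟨S', hbS', -, ⟨b', hb', hgcd⟩, hS'n⟩ := hn {b} (by simpa using hb)
  have hbS'' : b ∈ S' := hbS' (Finset.mem_singleton_self b)
  -- `b ∣ n ∣ b'` forces `b = b'`, and then `n = gcd b (lcm S') = b`
  have hbb' : b = b' :=
    hprim b hb b' hb' ((Int.natCast_dvd_natCast.1 hbn).trans (hgcd ▸ Nat.gcd_dvd_left _ _))
  exact hS'n b hbS'' (by rw [hgcd, ← hbb', Nat.gcd_eq_left (dvd_lcmS hbS'')])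

lemma notMem_Eset_of_mem_Ainfty {n : ℕ} (hn : n ∈ Ainfty B) : (n : ℤ) ∉ Eset B := by
  refine notMem_Eset_iff.2 fun T hT => ?_
  obtain ⟨S', hTS', -, ⟨b, hb, hgcd⟩, -⟩ := hn T hT
  refine ⟨_, ⟨b, hb, rfl⟩, Int.natCast_dvd_natCast.2 ?_⟩
  rw [hgcd]
  exact Nat.gcd_dvd_gcd_of_dvd_right _ (lcmS_dvd_lcmS hTS')

lemma Ainfty_nonempty_of_bounded (N : ℕ)
    (h : ∀ T : Finset ℕ+, ↑T ⊆ B → ∃ T', T ⊆ T' ∧ ↑T' ⊆ B ∧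
      ∃ c ≤ N, c ∈ ASet B T' ∧ ∀ b ∈ T', (b : ℕ) ≠ c) :
    (Ainfty B).Nonempty :=
  Finset.exists_forall_exists_superset_of_bounded B _ N h

lemma Ainfty_nonempty_of_Eset_ne_FreeSet (hne : Eset B ≠ FreeSet B) : (Ainfty B).Nonempty := by
  obtain ⟨n, hnF, hnE⟩ := Set.exists_of_ssubset (Eset_subset_FreeSet.ssubset_of_ne hne)
  have hdvd := notMem_Eset_iff.1 hnE
  have hn0 : n ≠ 0 := by
    obtain ⟨_, ⟨b, hb, -⟩, -⟩ := hdvd ∅ (by simp)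
    rintro rfl
    exact hnF b hb (dvd_zero _)
  refine Ainfty_nonempty_of_bounded n.natAbs fun T hT => ?_
  obtain ⟨c, hc, hcn⟩ := hdvd T hT
  exact ⟨T, subset_rfl, hT, c, Nat.le_of_dvd (Int.natAbs_pos.2 hn0) (Int.natCast_dvd.1 hcn), hc,
    fun b hb hbc => hnF b (hT hb) (hbc ▸ hcn)⟩

lemma Ainfty_nonempty_of_not_regular (hne : window B ≠ closure (interior (window B))) :
    (Ainfty B).Nonempty := by
  classical
  obtain ⟨h, hW, hcl⟩ := Set.exists_of_ssubset
    ((closure_minimal interior_subset isClosed_window).ssubset_of_ne hne.symm)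
  obtain ⟨S, hS, hSE⟩ : ∃ (S : Finset ℕ+) (hS : (S : Set ℕ+) ⊆ B),
      ∀ n ∈ Eset B, deltaH B n ∉ cyl B S hS h := by
    simpa [mem_closure_interior_window_iff] using hcl
  obtain ⟨n₀, hn₀⟩ := exists_deltaH_mem_cyl (hS := hS) h
  refine Ainfty_nonempty_of_bounded (lcmS S) fun T hT => ?_
  have hST : ↑(S ∪ T) ⊆ B := by simpa using ⟨hS, hT⟩
  -- a representative of the class of `n₀` whose common divisors with `lcm (S ∪ T)` all divide
  -- `lcm S`; it keeps the element of `A_{S ∪ T}` found below bounded by `lcm S`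
  obtain ⟨n, hnn₀, hn⟩ :=
    Int.exists_modEq_forall_dvd_imp_dvd (lcmS_dvd_lcmS S.subset_union_left) n₀
  have hnS : deltaH B n ∈ cyl B S hS h :=
    cyl_eq_of_mem hn₀ ▸ deltaH_mem_cyl_deltaH_iff.2 hnn₀
  obtain ⟨c, hc, hcn⟩ := notMem_Eset_iff.1 (fun hnE => hSE n hnE hnS) (S ∪ T) hST
  have hcS : c ∣ lcmS S := hn c (dvd_lcmS_of_mem_ASet hc) hcn
  refine ⟨S ∪ T, Finset.subset_union_right, hST, c, Nat.le_of_dvd (NeZero.pos _) hcS, hc,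
    fun q hq hqc => hW ⟨q, hST hq⟩ ?_⟩
  subst hqc
  rw [apply_eq_of_deltaH_mem_cyl hnS (hST hq) hcS, ZMod.intCast_zmod_eq_zero_iff_dvd]
  exact hcn

lemma exists_gcd_dvd_of_mem_Ainfty {n : ℕ} (hn : n ∈ Ainfty B) (s : Finset ℕ+)
    (hs : ↑s ⊆ B) :
    ∃ b ∈ B, n ∣ b ∧ ∀ x ∈ s, x ≠ b ∧ Nat.gcd x b ∣ n := by
  obtain ⟨S', hsS', -, ⟨b, hb, hgcd⟩, hS'n⟩ := hn s hs
  have hbS' : b ∉ S' := fun hbS' => hS'n b hbS' (by rw [hgcd, Nat.gcd_eq_left (dvd_lcmS hbS')])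
  refine ⟨b, hb, hgcd ▸ Nat.gcd_dvd_left _ _, fun x hx =>
    ⟨fun hxb => hbS' (hxb ▸ hsS' hx), ?_⟩⟩
  rw [hgcd, Nat.gcd_comm]
  exact Nat.gcd_dvd_gcd_of_dvd_right _ (dvd_lcmS (hsS' hx))

lemma exists_scaled_coprime_of_mem_Ainfty {n : ℕ} (hn : n ∈ Ainfty B) :
    ∃ A : Set ℕ, A.Infinite ∧ (∀ a ∈ A, 1 < a) ∧ A.Pairwise Nat.Coprime ∧
      ∀ a ∈ A, ∃ b ∈ B, (b : ℕ) = n * a := by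
  let r : ℕ+ → ℕ+ → Prop := fun x y => x ≠ y ∧ Nat.gcd x y ∣ n
  have : Std.Symm r := ⟨fun x y hxy => ⟨hxy.1.symm, Nat.gcd_comm (x : ℕ) y ▸ hxy.2⟩⟩
  obtain ⟨f, hfB, hf⟩ := exists_seq_of_forall_finset_exists' (fun b => b ∈ B ∧ n ∣ b) r
    fun s hs =>
      let ⟨b, hb, hnb, hsb⟩ := exists_gcd_dvd_of_mem_Ainfty hn s fun x hx => (hs x hx).1
      ⟨b, ⟨hb, hnb⟩, hsb⟩
  have hf_inj : Function.Injective fun k => (f k : ℕ) :=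
    fun k l hkl => by_contra fun hne => (hf hne).1 (PNat.coe_injective hkl)
  obtain ⟨A, hA, hA1, hAcop, hAC⟩ :=
    (Set.infinite_range_of_injective hf_inj).exists_pairwise_coprime_of_pairwise_gcd_dvd (n := n)
      (by rintro _ ⟨k, rfl⟩; exact (hfB k).2)
      (by rintro ⟨k, hk⟩; exact PNat.ne_zero _ hk)
      (by rintro ⟨k, hk⟩; exact coe_ne_of_mem_Ainfty hn (hfB k).1 hk)
      (by rintro _ ⟨k, rfl⟩ _ ⟨l, rfl⟩ hkl; exact (hf fun h => hkl (by rw [h])).2)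
  refine ⟨A, hA, hA1, hAcop, fun a ha => ?_⟩
  obtain ⟨k, hk⟩ := hAC a ha
  exact ⟨f k, (hfB k).1, hk⟩

lemma notMem_Eset_of_scaled_coprime {d : ℕ} {A : Set ℕ} (hA : A.Infinite)
    (hAcop : A.Pairwise Nat.Coprime) (hAB : ∀ a ∈ A, ∃ b ∈ B, (b : ℕ) = d * a) {n : ℤ}
    (hdn : (d : ℤ) ∣ n) : n ∉ Eset B := by
  refine notMem_Eset_iff.2 fun T _ => ?_
  obtain ⟨a, ha, hacop⟩ := Set.Infinite.exists_coprime hA hAcop (lcmS_ne_zero T)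
  obtain ⟨b, hb, hba⟩ := hAB a ha
  refine ⟨_, ⟨b, hb, rfl⟩, (Int.natCast_dvd_natCast.2 ?_).trans hdn⟩
  rw [hba, Nat.Coprime.gcd_mul_right_cancel d hacop]
  exact Nat.gcd_dvd_left _ _

lemma mem_FreeSet_of_scaled_coprime (hprim : Primitive B) {d : ℕ} {A : Set ℕ} (hA : A.Infinite)
    (hAB : ∀ a ∈ A, ∃ b ∈ B, (b : ℕ) = d * a) : (d : ℤ) ∈ FreeSet B := by
  intro b hb hbd
  obtain ⟨a₁, ha₁, a₂, ha₂, hne⟩ := hA.nontrivial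
  obtain ⟨b₁, hb₁, hb₁d⟩ := hAB a₁ ha₁
  obtain ⟨b₂, hb₂, hb₂d⟩ := hAB a₂ ha₂
  have hbd' := Int.natCast_dvd_natCast.1 hbd
  have e₁ := hprim b hb b₁ hb₁ (hb₁d ▸ hbd'.mul_right a₁)
  have e₂ := hprim b hb b₂ hb₂ (hb₂d ▸ hbd'.mul_right a₂)
  have hd0 : d ≠ 0 := by rintro rfl; simp at hb₁d
  refine hne (Nat.eq_of_mul_eq_mul_left (Nat.pos_of_ne_zero hd0) ?_)
  rw [← hb₁d, ← hb₂d, ← e₁, ← e₂]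

lemma window_ne_closure_interior_of_scaled_coprime (hprim : Primitive B) {d : ℕ} {A : Set ℕ}
    (hA : A.Infinite) (hAcop : A.Pairwise Nat.Coprime)
    (hAB : ∀ a ∈ A, ∃ b ∈ B, (b : ℕ) = d * a) :
    window B ≠ closure (interior (window B)) := by
  intro hreg
  have hdW : deltaH B d ∈ window B :=
    deltaH_mem_window_iff.2 (mem_FreeSet_of_scaled_coprime hprim hA hAB)
  obtain ⟨a, ha⟩ := hA.nonempty
  obtain ⟨b, hb, hbd⟩ := hAB a ha
  -- near `Δ d`, every `Δ n` has `n ≡ d (mod b)`, hence `d ∣ n`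
  obtain ⟨n, hnE, hn⟩ :=
    mem_closure_interior_window_iff.1 (hreg ▸ hdW) {b} (by simpa using hb)
  have hnd : n ≡ d [ZMOD (b : ℕ)] :=
    modEq_lcmS_iff.1 (deltaH_mem_cyl_deltaH_iff.1 hn) b (Finset.mem_singleton_self b)
  refine notMem_Eset_of_scaled_coprime hA hAcop hAB ?_ hnE
  have hdb : (d : ℤ) ∣ ((b : ℕ) : ℤ) :=
    Int.natCast_dvd_natCast.2 (hbd ▸ dvd_mul_right d a)
  exact Int.modEq_zero_iff_dvd.1 ((hnd.of_dvd hdb).trans (Int.modEq_zero_iff_dvd.2 dvd_rfl))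

theorem statement3_general (B : Set ℕ+) (hprim : Primitive B) :
    List.TFAE [
      window B = closure (interior (window B)),
      ¬ ∃ (d : ℕ) (A : Set ℕ), A.Infinite ∧ (∀ a ∈ A, 1 < a) ∧
          A.Pairwise Nat.Coprime ∧ (∀ a ∈ A, ∃ b ∈ B, (b : ℕ) = d * a),
      Ainfty B = ∅,
      Eset B = FreeSet B ] := by
  tfae_have 1 → 2 := fun hreg ⟨_, _, hA, _, hAcop, hAB⟩ =>
    window_ne_closure_interior_of_scaled_coprime hprim hA hAcop hAB hreg
  tfae_have 2 → 3 := fun h => Set.eq_empty_iff_forall_notMem.2 fun n hn =>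
    h ⟨n, exists_scaled_coprime_of_mem_Ainfty hn⟩
  tfae_have 3 → 4 := fun h => by_contra fun hne =>
    (Ainfty_nonempty_of_Eset_ne_FreeSet hne).ne_empty h
  tfae_have 4 → 3 := fun h => Set.eq_empty_iff_forall_notMem.2 fun n hn =>
    notMem_Eset_of_mem_Ainfty hn (h ▸ mem_FreeSet_of_mem_Ainfty hprim hn)
  tfae_have 3 → 1 := fun h => by_contra fun hne =>
    (Ainfty_nonempty_of_not_regular hne).ne_empty h
  tfae_finish

/-- For an infinite primitive set `B` of positive integers the following are
equivalent: (i) the window is topologically regular; (ii) there are no `d ∈ ℕ` and no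
infinite pairwise coprime `A ⊆ ℕ ∖ {1}` with `d·A ⊆ B`; (iii) `A_∞ = ∅`; (iv) `E = F_B`. -/
theorem statement3 (B : Set ℕ+) (hB : B.Infinite) (hprim : Primitive B) :
    List.TFAE [
      window B = closure (interior (window B)),
      ¬ ∃ (d : ℕ) (A : Set ℕ), A.Infinite ∧ (∀ a ∈ A, 1 < a) ∧
          A.Pairwise Nat.Coprime ∧ (∀ a ∈ A, ∃ b ∈ B, (b : ℕ) = d * a),
      Ainfty B = ∅,
      Eset B = FreeSet B ] :=
  statement3_general B hprim

end BFree
end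

section
/- If B is an infinite primitive set of positive integers and η is a Toeplitz sequence, then B is taut. -/
open Set MeasureTheory Filter Topology

namespace BFree

/-!
Fix `b₀ ∈ B`. By primitivity every proper divisor `d` of `b₀` is `B`-free, and the Toeplitz
property makes a whole progression `d + m_d ℤ` `B`-free; by Bézout this means
`gcd(b, m_d) ∤ d` for every `b ∈ B`. Put `L = b₀ ∏_d m_d`. The progression `b₀ + Lℤ` lies in
`M_B`, but it contains no multiple of any other `b ∈ B`: with `d = gcd(b, b₀)`, a proper divisor
of `b₀`, the number `gcd(b, m_d)` divides `L` and would divide `b₀`, hence `d`. So removing `b₀`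
loses a progression of positive density.
-/

lemma densSeq_nonneg (A : Set ℤ) (N : ℕ) : 0 ≤ densSeq A N := by
  unfold densSeq; positivity

lemma densSeq_le_one (A : Set ℤ) (N : ℕ) : densSeq A N ≤ 1 := by
  rcases Nat.eq_zero_or_pos N with rfl | hN
  · simp [densSeq]
  rw [densSeq, div_le_one (by exact_mod_cast hN)]
  have hcard : Nat.card ↥(A ∩ Icc (1 : ℤ) N) ≤ N := by
    rw [Nat.card_coe_set_eq]
    calc (A ∩ Icc (1 : ℤ) N).ncard ≤ (Icc (1 : ℤ) N).ncard :=
          ncard_le_ncard inter_subset_right (finite_Icc _ _)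
      _ = N := by rw [← Finset.coe_Icc, ncard_coe_finset, Int.card_Icc]; simp
  exact_mod_cast hcard

lemma densSeq_mono {A A' : Set ℤ} (h : A ⊆ A') (N : ℕ) : densSeq A N ≤ densSeq A' N := by
  unfold densSeq
  gcongr
  exact Nat.card_mono ((finite_Icc _ _).subset inter_subset_right) (inter_subset_inter_left _ h)

lemma densSeq_union {A P : Set ℤ} (h : Disjoint A P) (N : ℕ) :
    densSeq (A ∪ P) N = densSeq A N + densSeq P N := by
  have hfin : ∀ S : Set ℤ, (S ∩ Icc (1 : ℤ) N).Finite :=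
    fun S => (finite_Icc _ _).subset inter_subset_right
  simp only [densSeq, Nat.card_coe_set_eq, union_inter_distrib_right, ← add_div]
  rw [ncard_union_eq (h.mono inter_subset_left inter_subset_left) (hfin A) (hfin P)]
  push_cast; rfl

lemma div_le_ncard_modEq_inter_Icc (v : ℤ) {L : ℕ} (hL : 0 < L) (N : ℕ) :
    N / L ≤ ({x : ℤ | x ≡ v [ZMOD L]} ∩ Icc (1 : ℤ) N).ncard := by
  have hset : {x : ℤ | x ≡ v [ZMOD L]} ∩ Icc (1 : ℤ) N
      = ↑({x ∈ Finset.Ioc (0 : ℤ) N | x ≡ v [ZMOD L]}) := by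
    ext x; simp [and_comm, Int.lt_iff_add_one_le]
  rw [← Int.ofNat_le, hset, ncard_coe_finset,
    Int.Ioc_filter_modEq_card _ _ (by exact_mod_cast hL)]
  refine le_trans ?_ (le_max_left _ _)
  have hfloor := Int.le_floor_add ((N : ℚ) / L) (-v / (L : ℚ))
  rw [← add_div, Rat.floor_natCast_div_natCast, ← Int.natCast_div, ← sub_eq_add_neg] at hfloor
  simp only [Int.cast_natCast, Int.cast_zero, zero_sub]
  linarith

lemma densSeq_modEq_ge (v : ℤ) {L N : ℕ} (hL : 0 < L) (hN : L ≤ N) :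
    1 / (2 * L : ℝ) ≤ densSeq {x | x ≡ v [ZMOD L]} N := by
  have hN_le : N ≤ N / L * (2 * L) := by
    nlinarith [Nat.lt_div_mul_add (a := N) hL, Nat.div_pos hN hL]
  have hcount := div_le_ncard_modEq_inter_Icc v hL N
  rw [densSeq, Nat.card_coe_set_eq, le_div_iff₀ (by exact_mod_cast hL.trans_le hN),
    div_mul_eq_mul_div, one_mul, div_le_iff₀ (by positivity)]
  calc (N : ℝ) ≤ (N / L : ℕ) * (2 * L) := by exact_mod_cast hN_le
    _ ≤ _ := by gcongr

lemma lowerDensity_add_le_of_eventually {A A' : Set ℤ} {c : ℝ}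
    (h : ∀ᶠ N in atTop, densSeq A N + c ≤ densSeq A' N) :
    lowerDensity A + c ≤ lowerDensity A' := by
  have hbdd : ∀ S : Set ℤ, IsBoundedUnder (· ≥ ·) atTop (densSeq S) :=
    fun S => isBoundedUnder_of ⟨0, densSeq_nonneg S⟩
  have hcobdd : ∀ S : Set ℤ, IsCoboundedUnder (· ≥ ·) atTop (densSeq S) :=
    fun S => (isBoundedUnder_of ⟨1, densSeq_le_one S⟩).isCoboundedUnder_ge
  rw [lowerDensity, lowerDensity, ← liminf_add_const atTop _ c (hcobdd A) (hbdd A)]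
  exact liminf_le_liminf h
    (isBoundedUnder_of ⟨c, fun N => le_add_of_nonneg_left (densSeq_nonneg A N)⟩) (hcobdd A')

lemma lowerDensity_lt_of_disjoint_modEq {A A' : Set ℤ} {v : ℤ} {L : ℕ} (hL : 0 < L)
    (hA : A ⊆ A') (hP : {x | x ≡ v [ZMOD L]} ⊆ A') (hdisj : Disjoint A {x | x ≡ v [ZMOD L]}) :
    lowerDensity A < lowerDensity A' := by
  have hgap : ∀ᶠ N in atTop, densSeq A N + 1 / (2 * L : ℝ) ≤ densSeq A' N := by
    filter_upwards [eventually_ge_atTop L] with N hN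
    calc densSeq A N + 1 / (2 * L : ℝ)
        ≤ densSeq A N + densSeq {x | x ≡ v [ZMOD L]} N := by
          gcongr; exact densSeq_modEq_ge v hL hN
      _ = densSeq (A ∪ {x | x ≡ v [ZMOD L]}) N := (densSeq_union hdisj N).symm
      _ ≤ densSeq A' N := densSeq_mono (union_subset hA hP) N
  have hpos : (0 : ℝ) < 1 / (2 * L) := by positivity
  linarith [lowerDensity_add_le_of_eventually hgap]

lemma exists_dvd_add_mul_of_gcd_dvd {b m n : ℤ} (h : (Int.gcd b m : ℤ) ∣ n) :
    ∃ j : ℤ, b ∣ n + j * m := by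
  obtain ⟨t, rfl⟩ := h
  refine ⟨-(Int.gcdB b m * t), Int.gcdA b m * t, ?_⟩
  rw [Int.gcd_eq_gcd_ab]
  ring

lemma gcd_not_dvd_of_forall_add_mul_mem_freeSet {B : Set ℕ+} {n : ℤ} {m : ℕ}
    (hfree : ∀ j : ℤ, n + j * m ∈ FreeSet B) {b : ℕ+} (hb : b ∈ B) :
    ¬ (Nat.gcd b m : ℤ) ∣ n := by
  intro hdvd
  obtain ⟨j, hj⟩ := exists_dvd_add_mul_of_gcd_dvd (b := (b : ℕ)) (m := m) (by exact_mod_cast hdvd)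
  exact hfree j b hb hj

lemma Primitive.mem_freeSet_of_mem_properDivisors {B : Set ℕ+} (hprim : Primitive B)
    {b₀ : ℕ+} (hb₀ : b₀ ∈ B) {d : ℕ} (hd : d ∈ (b₀ : ℕ).properDivisors) :
    (d : ℤ) ∈ FreeSet B := by
  intro b hb hbd
  have hbd : (b : ℕ) ∣ d := by exact_mod_cast hbd
  obtain ⟨hdb₀, hlt⟩ := Nat.mem_properDivisors.mp hd
  obtain rfl := hprim b hb b₀ hb₀ (hbd.trans hdb₀)
  exact (Nat.le_of_dvd (Nat.pos_of_mem_properDivisors hd) hbd).not_gt hlt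

lemma Primitive.not_dvd_of_modEq {B : Set ℕ+} (hprim : Primitive B) {b₀ b : ℕ+}
    (hb₀ : b₀ ∈ B) (hb : b ∈ B) (hne : b ≠ b₀) {m : ℕ → ℕ}
    (hm : ∀ d ∈ (b₀ : ℕ).properDivisors, ∀ j : ℤ, (d : ℤ) + j * m d ∈ FreeSet B)
    {L : ℕ} (hL : ∀ d ∈ (b₀ : ℕ).properDivisors, m d ∣ L) {x : ℤ} (hx : x ≡ b₀ [ZMOD L]) :
    ¬ (b : ℤ) ∣ x := by
  intro hbx
  set d := Nat.gcd b b₀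
  have hd : d ∈ (b₀ : ℕ).properDivisors := by
    refine Nat.mem_properDivisors.mpr ⟨Nat.gcd_dvd_right _ _, ?_⟩
    refine (Nat.le_of_dvd b₀.pos (Nat.gcd_dvd_right _ _)).lt_of_ne fun hd => hne ?_
    exact (hprim b₀ hb₀ b hb (hd ▸ Nat.gcd_dvd_left _ _)).symm
  set g := Nat.gcd b (m d)
  have hgx : (g : ℤ) ∣ x := (Int.natCast_dvd_natCast.mpr (Nat.gcd_dvd_left _ _)).trans hbx
  have hgL : (g : ℤ) ∣ L := Int.natCast_dvd_natCast.mpr ((Nat.gcd_dvd_right _ _).trans (hL d hd))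
  have hgb₀ : (g : ℤ) ∣ b₀ := (hx.of_dvd hgL).dvd_iff.mp hgx
  have hgd : g ∣ d := Nat.dvd_gcd (Nat.gcd_dvd_left _ _) (by exact_mod_cast hgb₀)
  exact gcd_not_dvd_of_forall_add_mul_mem_freeSet (hm d hd) hb (by exact_mod_cast hgd)

theorem statement5_general (B : Set ℕ+) (hprim : Primitive B)
    (htoeplitz : ∀ n : ℤ, ∃ m : ℕ, 0 < m ∧ ∀ j : ℤ, eta B (n + j * m) = eta B n) :
    Taut B := by
  intro b₀ hb₀
  choose m hm_pos hm using htoeplitz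
  have hm_free : ∀ d ∈ (b₀ : ℕ).properDivisors, ∀ j : ℤ, (d : ℤ) + j * m d ∈ FreeSet B := by
    intro d hd j
    have hper := hm d j
    simp only [eta, decide_eq_decide] at hper
    exact hper.mpr (hprim.mem_freeSet_of_mem_properDivisors hb₀ hd)
  set L := (b₀ : ℕ) * ∏ d ∈ (b₀ : ℕ).properDivisors, m d
  have hL_pos : 0 < L := Nat.mul_pos b₀.pos (Finset.prod_pos fun d _ => hm_pos d)
  have hb₀L : ((b₀ : ℕ) : ℤ) ∣ L := by exact_mod_cast dvd_mul_right _ _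
  refine lowerDensity_lt_of_disjoint_modEq (v := b₀) hL_pos ?_ ?_ ?_
  · rintro x ⟨b, hb, hbx⟩
    exact ⟨b, hb.1, hbx⟩
  · intro x hx
    exact ⟨b₀, hb₀, (hx.of_dvd hb₀L).dvd_iff.mpr dvd_rfl⟩
  · rw [disjoint_left]
    rintro x ⟨b, ⟨hb, hne⟩, hbx⟩ hx
    exact hprim.not_dvd_of_modEq hb₀ hb hne hm_free
      (fun d hd => dvd_mul_of_dvd_right (Finset.dvd_prod_of_mem _ hd) _) hx hbx

/-- If `B` is an infinite primitive set of positive integers and `η` is a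
Toeplitz sequence, then `B` is taut. -/
theorem statement5 (B : Set ℕ+) (hB : B.Infinite) (hprim : Primitive B)
    (htoeplitz : ∀ n : ℤ, ∃ m : ℕ, 0 < m ∧ ∀ j : ℤ, eta B (n + j * m) = eta B n) :
    Taut B :=
  statement5_general B hprim htoeplitz

end BFree
end

section
/- Let B be a set of positive integers, S ⊆ B finite, and n ∈ ℤ. If U_S(Δ(n)) ∩ W = ∅, then the arithmetic progression n + lcm(S)·ℤ is contained in M_{B ∩ A_S}. -/
open Set MeasureTheory Filter Topology

namespace BFree

/-!
The cylinder `U_S(Δ(n))` is compact and misses the window, so finitely many `b ∈ B` already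
cover it: every `t ≡ n (mod lcm S)` is divisible by one of them. For `N = n + lcm(S)·j` and
`g = gcd(N, lcm S)`, Dirichlet's theorem gives a prime `q`, larger than all these `b`, with
`g·q ≡ N (mod lcm S)`. The `b` dividing `g·q` is coprime to `q`, so it divides `g`; hence
`b = gcd(b, lcm S) ∈ A_S` and `b ∣ N`.
-/

theorem exists_prime_gt_gcd_mul_modEq (N : ℤ) {L : ℕ} (hL : L ≠ 0) (Q : ℕ) :
    ∃ q > Q, q.Prime ∧ (N.gcd L : ℤ) * q ≡ N [ZMOD L] := by
  have hg : 0 < N.gcd L := Int.gcd_pos_of_ne_zero_right _ (by exact_mod_cast hL)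
  obtain ⟨N', L', hcop, hN, hLfac⟩ := Int.exists_gcd_one hg
  have hL' : L'.natAbs ≠ 0 := by
    rintro h
    rw [Int.natAbs_eq_zero.mp h, zero_mul] at hLfac
    exact hL (by exact_mod_cast hLfac)
  have hcop' : IsCoprime N' (L'.natAbs : ℤ) := by
    rwa [Int.isCoprime_iff_gcd_eq_one, Int.gcd_def, Int.natAbs_natCast]
  obtain ⟨q, hqQ, hq, hqN'⟩ := Nat.forall_exists_prime_gt_and_zmodEq Q hL' hcop'
  have h := (Int.modEq_natAbs.mp hqN').mul_left' (c := (N.gcd L : ℤ))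
  rw [mul_comm _ N', ← hN, mul_comm _ L', ← hLfac] at h
  exact ⟨q, hqQ, hq, h⟩

theorem exists_dvd_gcd_of_forall_modEq_exists_dvd {L : ℕ} {N : ℤ} (T : Finset ℕ+)
    (hcover : ∀ t : ℤ, t ≡ N [ZMOD L] → ∃ b ∈ T, ((b : ℕ) : ℤ) ∣ t) :
    ∃ b ∈ T, (b : ℕ) ∣ L ∧ ((b : ℕ) : ℤ) ∣ N := by
  rcases eq_or_ne L 0 with rfl | hL
  · obtain ⟨b, hbT, hbN⟩ := hcover N rfl
    exact ⟨b, hbT, dvd_zero _, hbN⟩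
  obtain ⟨q, hqT, hq, hmod⟩ := exists_prime_gt_gcd_mul_modEq N hL (T.sup (fun b => (b : ℕ)))
  obtain ⟨b, hbT, hbdvd⟩ := hcover _ hmod
  have hbq : Nat.Coprime b q := by
    refine ((Nat.Prime.coprime_iff_not_dvd hq).mpr fun hqb => ?_).symm
    have := (Nat.le_of_dvd b.pos hqb).trans (Finset.le_sup (f := fun b : ℕ+ => (b : ℕ)) hbT)
    omega
  have hbg : ((b : ℕ) : ℤ) ∣ N.gcd L := hbq.isCoprime.dvd_of_dvd_mul_right hbdvd
  exact ⟨b, hbT, Int.natCast_dvd_natCast.mp (hbg.trans (Int.gcd_dvd_right _ _)),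
    hbg.trans (Int.gcd_dvd_left _ _)⟩

theorem isClosed_cyl (B : Set ℕ+) (S : Finset ℕ+) (hS : ↑S ⊆ B) (h : Hspace B) :
    IsClosed (cyl B S hS h) := by
  simp only [cyl, ofPred_forall]
  exact isClosed_iInter fun b => isClosed_iInter fun hb =>
    isClosed_eq ((continuous_apply _).comp continuous_subtype_val) continuous_const

theorem deltaH_mem_cyl_of_modEq (B : Set ℕ+) (S : Finset ℕ+) (hS : ↑S ⊆ B) {t n : ℤ}
    (htn : t ≡ n [ZMOD lcmS S]) : deltaH B t ∈ cyl B S hS (deltaH B n) := fun _ hb =>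
  (ZMod.intCast_eq_intCast_iff' _ _ _).mpr <|
    Int.ModEq.of_dvd (Int.natCast_dvd_natCast.mpr (Finset.dvd_lcm hb)) htn

theorem exists_finset_cover_of_inter_window_eq_empty {B : Set ℕ+}
    {K : Set (Hspace B)} (hK : IsClosed K) (hdisj : K ∩ window B = ∅) :
    ∃ T : Finset B, ∀ h ∈ K, ∃ b ∈ T, (h : Gspace B) b = 0 := by
  have hcover : K ⊆ ⋃ b : B, (fun h : Hspace B => (h : Gspace B) b) ⁻¹' {0} := by
    intro h hK
    simpa [window] using fun hW => hdisj.subset ⟨hK, hW⟩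
  obtain ⟨T, hT⟩ := hK.isCompact.elim_finite_subcover _
    (fun b => (isOpen_discrete _).preimage ((continuous_apply b).comp continuous_subtype_val))
    hcover
  exact ⟨T, fun h hK => by simpa using hT hK⟩

/-- If `U_S(Δ(n)) ∩ W = ∅`, then the arithmetic progression `n + lcm(S)·ℤ`
is contained in `M_{B ∩ A_S}`. -/
theorem statement14 (B : Set ℕ+) (S : Finset ℕ+) (hS : ↑S ⊆ B) (n : ℤ)
    (hdisj : cyl B S hS (deltaH B n) ∩ window B = ∅) :
    ∀ j : ℤ, ∃ m : ℕ, (∃ b ∈ B, (b : ℕ) = m) ∧ m ∈ ASet B S ∧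
      (m : ℤ) ∣ (n + (lcmS S : ℤ) * j) := by
  intro j
  obtain ⟨T, hT⟩ := exists_finset_cover_of_inter_window_eq_empty (isClosed_cyl B S hS _) hdisj
  have hcover : ∀ t : ℤ, t ≡ n + lcmS S * j [ZMOD lcmS S] →
      ∃ b ∈ T.map (Function.Embedding.subtype _), ((b : ℕ) : ℤ) ∣ t := by
    intro t ht
    obtain ⟨b, hbT, hb0⟩ :=
      hT _ (deltaH_mem_cyl_of_modEq B S hS (ht.trans Int.modEq_add_fac_self))
    exact ⟨b, Finset.mem_map_of_mem _ hbT, (ZMod.intCast_zmod_eq_zero_iff_dvd _ _).mp hb0⟩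
  obtain ⟨b, hbT, hbL, hbN⟩ := exists_dvd_gcd_of_forall_modEq_exists_dvd _ hcover
  obtain ⟨b, -, rfl⟩ := Finset.mem_map.mp hbT
  exact ⟨b, ⟨b, b.2, rfl⟩, ⟨b, b.2, (Nat.gcd_eq_left hbL).symm⟩, hbN⟩

end BFree
end
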